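/- For the 3×4 rectangle with generators σ_L = ((1,1),(1,3),(3,3),(3,1))((1,2),(2,3),(3,2),(2,1)) and σ_R = ((1,2),(1,4),(3,4),(3,2))((1,3),(2,4),(3,3),(2,2)), the group G = ⟨σ_L, σ_R⟩ has order 720 and is isomorphic to S₆; moreover the restriction of G to the orbit E = {(i,j) : i+j even} (which has 6 elements) is all of S₆. -/

import Mathlib

/-!
Restriction to the six even cells `E` maps `G` onto `Sym(E) ≅ S₆`: the images of `σ_L`, `σ_R`
produce a 6-cycle and a transposition of two of its adjacent points. The restriction is injective
because each odd cell determines, `G`-equivariantly, a synthematic total of `E` (this is the outer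
automorphism of `S₆`): an element fixing `E` pointwise fixes every total, hence every odd cell.
-/

/-- σ_L for the 3×4 rectangle: clockwise rotation of the left 3×3 block, the product of
the 4-cycles ((1,1),(1,3),(3,3),(3,1)) and ((1,2),(2,3),(3,2),(2,1)) (written here with
0-based indices). -/
def sigmaL34 : Equiv.Perm (Fin 3 × Fin 4) :=
  ([((0 : Fin 3), (0 : Fin 4)), (0, 2), (2, 2), (2, 0)]).formPerm *
  ([((0 : Fin 3), (1 : Fin 4)), (1, 2), (2, 1), (1, 0)]).formPerm

/-- σ_R for the 3×4 rectangle: clockwise rotation of the right 3×3 block, the product of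
the 4-cycles ((1,2),(1,4),(3,4),(3,2)) and ((1,3),(2,4),(3,3),(2,2)) (0-based indices). -/
def sigmaR34 : Equiv.Perm (Fin 3 × Fin 4) :=
  ([((0 : Fin 3), (1 : Fin 4)), (0, 3), (2, 3), (2, 1)]).formPerm *
  ([((0 : Fin 3), (2 : Fin 4)), (1, 3), (2, 2), (1, 1)]).formPerm

/-- The orbit E = {(i,j) : i+j even} of the 3×4 puzzle group (0-based indices have the
same parity of i+j as the paper's 1-based indices). -/
def orbitE : Set (Fin 3 × Fin 4) := {p | Even (p.1.1 + p.2.1)}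

open Equiv MulAction
open scoped Pointwise

section

variable {G α β : Type*} [Group G] [MulAction G α] [MulAction G β]

def equivariantSubgroup (f : α → β) : Subgroup G where
  carrier := {g | ∀ x, f (g • x) = g • f x}
  one_mem' x := by simp only [one_smul]
  mul_mem' {g h} hg hh x := by rw [mul_smul, hg (h • x), hh x, mul_smul]
  inv_mem' {g} hg x := by rw [eq_inv_smul_iff, ← hg, smul_inv_smul]

theorem mem_equivariantSubgroup {f : α → β} {g : G} :
    g ∈ equivariantSubgroup f ↔ ∀ x, f (g • x) = g • f x :=
  Iff.rfl

theorem Finset.smul_finset_eq_self_of_forall [DecidableEq α] {g : G} {s : Finset α}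
    (h : ∀ a ∈ s, g • a = a) : g • s = s := by
  rw [Finset.smul_finset_def]
  exact (Finset.image_congr h).trans Finset.image_id'

end

theorem Equiv.Perm.surjective_of_isCycle_of_swap_mem_range {H α : Type*} [Group H] [Fintype α]
    [DecidableEq α] {f : H →* Perm α} {c : Perm α} (hc : c.IsCycle) (hsupp : c.support = .univ)
    (x : α) (hcf : c ∈ f.range) (hsf : swap x (c x) ∈ f.range) : Function.Surjective f := by
  rw [← MonoidHom.range_eq_top, eq_top_iff, ← closure_cycle_adjacent_swap hc hsupp x,
    Subgroup.closure_le]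
  exact Set.insert_subset_iff.2 ⟨hcf, Set.singleton_subset_iff.2 hsf⟩

instance : DecidablePred (· ∈ orbitE) := fun p =>
  inferInstanceAs (Decidable (Even (p.1.1 + p.2.1)))

abbrev puzzleGroup : Subgroup (Perm (Fin 3 × Fin 4)) := Subgroup.closure {sigmaL34, sigmaR34}

theorem mem_puzzleGroup_sigmaL34 : sigmaL34 ∈ puzzleGroup :=
  Subgroup.subset_closure (Set.mem_insert _ _)

theorem mem_puzzleGroup_sigmaR34 : sigmaR34 ∈ puzzleGroup :=
  Subgroup.subset_closure (Set.mem_insert_of_mem _ rfl)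

theorem puzzleGroup_le_stabilizer : puzzleGroup ≤ stabilizer (Perm (Fin 3 × Fin 4)) orbitE := by
  simp only [Subgroup.closure_le, Set.insert_subset_iff, Set.singleton_subset_iff, SetLike.mem_coe,
    mem_stabilizer_set_iff_smul_set_subset orbitE.toFinite, Set.smul_set_subset_iff]
  decide

/- A synthematic total of `E` is a partition of its 15 pairs into 5 perfect matchings; `E` carries
six of them. `total` attaches one to each odd cell, transporting `baseTotal` along `σ_L` and `σ_R`
(on even cells it is `∅`). -/
def baseTotal : Finset (Finset (Finset (Fin 3 × Fin 4))) :=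
  {{{(0, 0), (0, 2)}, {(1, 1), (1, 3)}, {(2, 0), (2, 2)}},
   {{(0, 0), (1, 1)}, {(0, 2), (2, 0)}, {(1, 3), (2, 2)}},
   {{(0, 0), (1, 3)}, {(0, 2), (2, 2)}, {(1, 1), (2, 0)}},
   {{(0, 0), (2, 0)}, {(0, 2), (1, 3)}, {(1, 1), (2, 2)}},
   {{(0, 0), (2, 2)}, {(0, 2), (1, 1)}, {(1, 3), (2, 0)}}}

def total (x : Fin 3 × Fin 4) : Finset (Finset (Finset (Fin 3 × Fin 4))) :=
  if x = (0, 1) then baseTotal else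
  if x = (1, 2) then sigmaL34 • baseTotal else
  if x = (2, 1) then (sigmaL34 ^ 2) • baseTotal else
  if x = (1, 0) then sigmaL34⁻¹ • baseTotal else
  if x = (0, 3) then sigmaR34 • baseTotal else
  if x = (2, 3) then (sigmaR34 ^ 2) • baseTotal else ∅

theorem puzzleGroup_le_equivariantSubgroup_total : puzzleGroup ≤ equivariantSubgroup total := by
  simp only [Subgroup.closure_le, Set.insert_subset_iff, Set.singleton_subset_iff, SetLike.mem_coe,
    mem_equivariantSubgroup]
  decide

theorem total_injOn : Set.InjOn total orbitEᶜ := by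
  unfold Set.InjOn
  decide

theorem sup_total_subset_orbitE :
    ∀ x, (total x).sup (·.sup id) ⊆ Finset.univ.filter (· ∈ orbitE) := by
  decide

theorem mem_orbitE_of_mem_total {x : Fin 3 × Fin 4} {s d p} (hs : s ∈ total x) (hd : d ∈ s)
    (hp : p ∈ d) : p ∈ orbitE :=
  (Finset.mem_filter.1 <| sup_total_subset_orbitE x <|
    Finset.mem_sup.2 ⟨s, hs, Finset.mem_sup.2 ⟨d, hd, hp⟩⟩).2

theorem smul_total_eq_self {g : Perm (Fin 3 × Fin 4)} (hg : ∀ p ∈ orbitE, g p = p)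
    (x : Fin 3 × Fin 4) : g • total x = total x :=
  Finset.smul_finset_eq_self_of_forall fun _ hs =>
    Finset.smul_finset_eq_self_of_forall fun _ hd =>
      Finset.smul_finset_eq_self_of_forall fun p hp => hg p (mem_orbitE_of_mem_total hs hd hp)

theorem eq_one_of_mem_puzzleGroup_of_forall_mem_orbitE {g : Perm (Fin 3 × Fin 4)}
    (hG : g ∈ puzzleGroup) (hg : ∀ p ∈ orbitE, g p = p) : g = 1 := by
  ext x : 1
  rw [Perm.one_apply]
  by_cases hx : x ∈ orbitE
  · exact hg x hx
  have hgx : g x ∉ orbitE := fun h => hx (g.injective (hg _ h) ▸ h)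
  refine total_injOn hgx hx ?_
  rw [← Perm.smul_def, puzzleGroup_le_equivariantSubgroup_total hG x, smul_total_eq_self hg]

def restrictOrbitE : puzzleGroup →* Perm orbitE :=
  (toPermHom (stabilizer (Perm (Fin 3 × Fin 4)) orbitE) orbitE).comp
    (Subgroup.inclusion puzzleGroup_le_stabilizer)

theorem restrictOrbitE_injective : Function.Injective restrictOrbitE := by
  refine (injective_iff_map_eq_one restrictOrbitE).2 fun g hg => Subtype.ext ?_
  refine eq_one_of_mem_puzzleGroup_of_forall_mem_orbitE g.2 fun p hp => ?_
  exact congrArg (fun π : Perm orbitE => (π ⟨p, hp⟩ : Fin 3 × Fin 4)) hg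

set_option maxRecDepth 2000 in
theorem restrictOrbitE_surjective : Function.Surjective restrictOrbitE := by
  let gL : puzzleGroup := ⟨sigmaL34, mem_puzzleGroup_sigmaL34⟩
  let gR : puzzleGroup := ⟨sigmaR34, mem_puzzleGroup_sigmaR34⟩
  let l : List orbitE := [⟨(0, 0), by decide⟩, ⟨(1, 1), by decide⟩, ⟨(0, 2), by decide⟩,
    ⟨(2, 0), by decide⟩, ⟨(1, 3), by decide⟩, ⟨(2, 2), by decide⟩]
  have hl : l.Nodup := by decide
  have hcycle : restrictOrbitE (gR * gL * gL) = l.formPerm := by decide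
  have hswap : restrictOrbitE (gR * gL * gR * gR * gL * gL * gR) =
      swap ⟨(0, 0), by decide⟩ (l.formPerm ⟨(0, 0), by decide⟩) := by decide
  refine Perm.surjective_of_isCycle_of_swap_mem_range (List.isCycle_formPerm hl (by decide))
    ?_ _ ⟨_, hcycle⟩ ⟨_, hswap⟩
  rw [List.support_formPerm_of_nodup l hl (by decide)]
  decide

theorem card_orbitE : Nat.card orbitE = 6 := by
  rw [Nat.card_eq_fintype_card]
  decide

/-- For the 3×4 rectangle, the puzzle group G = ⟨σ_L, σ_R⟩ has order 720 and is
isomorphic to S₆; moreover the orbit E = {(i,j) : i+j even} has 6 elements, is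
preserved by G, and the restriction of G to E is all of S₆ (every permutation of E
is induced by some element of G). -/
theorem three_by_four_puzzle_group :
    Nat.card (Subgroup.closure {sigmaL34, sigmaR34}) = 720 ∧
    Nonempty ((Subgroup.closure {sigmaL34, sigmaR34}) ≃* Equiv.Perm (Fin 6)) ∧
    Nat.card orbitE = 6 ∧
    (∀ g ∈ Subgroup.closure {sigmaL34, sigmaR34}, ∀ p ∈ orbitE, g p ∈ orbitE) ∧
    (∀ π : Equiv.Perm orbitE, ∃ g ∈ Subgroup.closure {sigmaL34, sigmaR34},
      ∀ p : orbitE, g (p : Fin 3 × Fin 4) = ((π p : orbitE) : Fin 3 × Fin 4)) := by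
  have hbij : Function.Bijective restrictOrbitE :=
    ⟨restrictOrbitE_injective, restrictOrbitE_surjective⟩
  let iso : puzzleGroup ≃* Perm (Fin 6) :=
    (MulEquiv.ofBijective restrictOrbitE hbij).trans
      (permCongrHom (Finite.equivFinOfCardEq card_orbitE))
  refine ⟨?_, ⟨iso⟩, card_orbitE, fun g hg p hp => ?_, fun π => ?_⟩
  · rw [Nat.card_congr iso.toEquiv, Nat.card_perm, Nat.card_fin]
    rfl
  · rw [← mem_stabilizer_iff.1 (puzzleGroup_le_stabilizer hg)]
    exact Set.smul_mem_smul_set hp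
  · obtain ⟨g, rfl⟩ := restrictOrbitE_surjective π
    exact ⟨g, g.2, fun _ => rfl⟩
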